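/- Let 0 < q < 1 and let z be real with 0 ≤ z < 1. For all integers m, n ≥ 0, one has ∑_{a > m} (q^m z^{a−m}/[a])·C_q^{(1)}(a,n;z) = z·q^{mn+m+n}·[m]! [n]!/[m+n+1]! · φ_q(q^{m+1}, q^{n+1}; q^{m+n+2}; z), where the sum is over integers a > m; in particular the left-hand side is symmetric in m and n. -/

import Mathlib

/-- The q-integer [m] = (1 − q^m)/(1 − q). -/
noncomputable def qInt (q : ℝ) (m : ℕ) : ℝ := (1 - q ^ m) / (1 - q)

/-- The q-factorial [m]! = [1][2]⋯[m]. -/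
noncomputable def qFact (q : ℝ) (m : ℕ) : ℝ := ∏ i ∈ Finset.range m, qInt q (i + 1)

/-- The q-shifted factorial (a;q)_n = (1−a)(1−qa)⋯(1−q^{n−1}a). -/
noncomputable def qPoch (q a : ℝ) (n : ℕ) : ℝ := ∏ i ∈ Finset.range n, (1 - q ^ i * a)

/-- The q-hypergeometric series φ_q(α,β;γ;z) = ∑_{n≥0} (α;q)_n (β;q)_n / ((γ;q)_n (q;q)_n) · zⁿ. -/
noncomputable def qHyp (q α β γ z : ℝ) : ℝ :=
  ∑' n : ℕ, qPoch q α n * qPoch q β n / (qPoch q γ n * qPoch q q n) * z ^ n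

/-- The first q-connector C_q^{(1)}(m,n;z) = q^{mn} [m]![n]!/[m+n]! · φ_q(q^m,q^n;q^{m+n+1};z). -/
noncomputable def Cq1 (q : ℝ) (m n : ℕ) (z : ℝ) : ℝ :=
  q ^ (m * n) * (qFact q m * qFact q n / qFact q (m + n)) *
    qHyp q (q ^ m) (q ^ n) (q ^ (m + n + 1)) z

/-!
Expanding each `Cq1 q (m + 1 + i) n z` as its series turns the left-hand side into a double
series in `(i, j)`. With `[k]! = (q;q)_k / (1-q)^k` and `(q^(k+1);q)_j = (q;q)_(k+j) / (q;q)_k`,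
the `(i, j)` term is a function of `i + j` times `q^(n i) (q^n;q)_j / (q;q)_j`, and summing along
`i + j = N` with `∑_{i+j=N} a^i (a;q)_j / (q;q)_j = (aq;q)_N / (q;q)_N` gives the `N`-th term of
the right-hand side. All terms are nonnegative and the antidiagonal sums are `O(z^N)`, which
justifies the rearrangement. The right-hand side is symmetric in `m` and `n`.
-/

open Finset

section QPochhammer

variable {q : ℝ}

lemma qFact_eq_qPoch_div (m : ℕ) : qFact q m = qPoch q q m / (1 - q) ^ m := by
  simp only [qFact, qPoch, qInt, prod_div_distrib, prod_const, card_range, pow_succ]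

lemma qFact_succ (m : ℕ) : qFact q (m + 1) = qFact q m * qInt q (m + 1) :=
  prod_range_succ _ m

lemma qPoch_succ (a : ℝ) (k : ℕ) : qPoch q a (k + 1) = qPoch q a k * (1 - q ^ k * a) :=
  prod_range_succ _ k

lemma qPoch_add (a : ℝ) (k l : ℕ) :
    qPoch q a (k + l) = qPoch q a k * qPoch q (q ^ k * a) l := by
  simp only [qPoch, prod_range_add, pow_add, mul_assoc, mul_left_comm]

lemma qPoch_q_add (k l : ℕ) : qPoch q q (k + l) = qPoch q q k * qPoch q (q ^ (k + 1)) l := by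
  rw [qPoch_add, pow_succ]

lemma qPoch_pow_succ_pos (hq0 : 0 ≤ q) (hq1 : q < 1) (k l : ℕ) :
    0 < qPoch q (q ^ (k + 1)) l :=
  prod_pos fun i _ => by
    rw [sub_pos, ← pow_add]; exact pow_lt_one₀ hq0 hq1 (by omega)

lemma qPoch_q_pos (hq0 : 0 ≤ q) (hq1 : q < 1) (l : ℕ) : 0 < qPoch q q l := by
  simpa using qPoch_pow_succ_pos hq0 hq1 0 l

lemma qPoch_pow_nonneg (hq0 : 0 ≤ q) (hq1 : q ≤ 1) (k l : ℕ) : 0 ≤ qPoch q (q ^ k) l :=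
  prod_nonneg fun i _ => by
    rw [sub_nonneg, ← pow_add]; exact pow_le_one₀ hq0 hq1

lemma qPoch_pow_le_one (hq0 : 0 ≤ q) (hq1 : q ≤ 1) (k l : ℕ) : qPoch q (q ^ k) l ≤ 1 :=
  prod_le_one (fun i _ => by rw [sub_nonneg, ← pow_add]; exact pow_le_one₀ hq0 hq1)
    fun i _ => by have := pow_nonneg hq0 (i + k); rw [← pow_add]; linarith

lemma qPoch_q_le_qPoch_pow_succ (hq0 : 0 ≤ q) (hq1 : q ≤ 1) (k l : ℕ) :
    qPoch q q l ≤ qPoch q (q ^ (k + 1)) l :=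
  prod_le_prod (fun i _ => by rw [sub_nonneg, ← pow_succ]; exact pow_le_one₀ hq0 hq1)
    fun i _ => by
      rw [← pow_succ, ← pow_add]
      exact sub_le_sub_left (pow_le_pow_of_le_one hq0 hq1 (by omega)) 1

lemma qPoch_q_add_le (hq0 : 0 ≤ q) (hq1 : q ≤ 1) (k l : ℕ) :
    qPoch q q (k + l) ≤ qPoch q q k := by
  rw [qPoch_q_add]
  exact mul_le_of_le_one_right (by simpa using qPoch_pow_nonneg hq0 hq1 1 k)
    (qPoch_pow_le_one hq0 hq1 _ l)

lemma qPoch_q_mul_le_qPoch_q_add (hq0 : 0 ≤ q) (hq1 : q ≤ 1) (k l : ℕ) :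
    qPoch q q k * qPoch q q l ≤ qPoch q q (k + l) := by
  rw [qPoch_q_add]
  exact mul_le_mul_of_nonneg_left (qPoch_q_le_qPoch_pow_succ hq0 hq1 k l)
    (by simpa using qPoch_pow_nonneg hq0 hq1 1 k)

lemma qPoch_q_div_qPoch_q_add_le (hq0 : 0 ≤ q) (hq1 : q < 1) (k l : ℕ) :
    qPoch q q k / qPoch q q (k + l) ≤ 1 / qPoch q q l := by
  rw [div_le_div_iff₀ (qPoch_q_pos hq0 hq1 _) (qPoch_q_pos hq0 hq1 _), one_mul]
  exact qPoch_q_mul_le_qPoch_q_add hq0 hq1.le k l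

lemma qPoch_pow_succ_div_qPoch_q_le (hq0 : 0 ≤ q) (hq1 : q < 1) (k l : ℕ) :
    qPoch q (q ^ (k + 1)) l / qPoch q q l ≤ 1 / qPoch q q k := by
  rw [div_le_div_iff₀ (qPoch_q_pos hq0 hq1 _) (qPoch_q_pos hq0 hq1 _), one_mul, mul_comm,
    ← qPoch_q_add, add_comm]
  exact qPoch_q_add_le hq0 hq1.le l k

lemma qFact_ratio_mul_qPoch_ratio (hq0 : 0 ≤ q) (hq1 : q < 1) (k n j : ℕ) :
    qFact q k * qFact q n / qFact q (k + n + 1) *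
        (qPoch q (q ^ (k + 1)) j / qPoch q (q ^ (k + n + 2)) j) =
      (1 - q) * qPoch q q n * (qPoch q q (k + j) / qPoch q q (k + j + n + 1)) := by
  have hP := fun l => (qPoch_q_pos hq0 hq1 l).ne'
  have h1q : 1 - q ≠ 0 := by linarith
  have hnum : qPoch q (q ^ (k + 1)) j = qPoch q q (k + j) / qPoch q q k := by
    rw [qPoch_q_add, mul_div_cancel_left₀ _ (hP k)]
  have hden :
      qPoch q (q ^ (k + n + 2)) j = qPoch q q (k + j + n + 1) / qPoch q q (k + n + 1) := by
    rw [show k + j + n + 1 = k + n + 1 + j by omega, qPoch_q_add, mul_div_cancel_left₀ _ (hP _)]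
  rw [hnum, hden, qFact_eq_qPoch_div, qFact_eq_qPoch_div, qFact_eq_qPoch_div]
  field_simp [hP]
  ring

lemma sum_antidiagonal_pow_mul_qPoch_div (hq0 : 0 ≤ q) (hq1 : q < 1) (a : ℝ) (N : ℕ) :
    ∑ p ∈ antidiagonal N, a ^ p.1 * (qPoch q a p.2 / qPoch q q p.2) =
      qPoch q (a * q) N / qPoch q q N := by
  induction N with
  | zero => simp [qPoch]
  | succ N ih =>
    have hP := fun l => (qPoch_q_pos hq0 hq1 l).ne'
    have hq : 1 - q ^ (N + 1) ≠ 0 := (sub_pos.2 (pow_lt_one₀ hq0 hq1 N.succ_ne_zero)).ne'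
    have hshift : qPoch q a (N + 1) = (1 - a) * qPoch q (a * q) N := by
      rw [add_comm, qPoch_add, qPoch_succ]; simp [qPoch, mul_comm]
    have hsum : ∑ p ∈ antidiagonal N, a ^ (p.1 + 1) * (qPoch q a p.2 / qPoch q q p.2) =
        a * (qPoch q (a * q) N / qPoch q q N) := by
      rw [← ih, mul_sum]; exact sum_congr rfl fun p _ => by ring
    rw [Nat.sum_antidiagonal_succ, hsum, pow_zero, one_mul, hshift, qPoch_succ (a * q),
      qPoch_succ q, ← pow_succ]
    field_simp
    ring

end QPochhammer

lemma tsum_subtype_lt_eq_tsum_add {α : Type*} [AddCommMonoid α] [TopologicalSpace α]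
    (f : ℕ → α) (m : ℕ) : ∑' a : {a : ℕ // m < a}, f a = ∑' i, f (m + 1 + i) :=
  let e : ℕ ≃ {a : ℕ // m < a} :=
    { toFun := fun i => ⟨m + 1 + i, by omega⟩
      invFun := fun a => a - (m + 1)
      left_inv := fun i => by simp
      right_inv := fun a => Subtype.ext (by have := a.2; simp only; omega) }
  (e.tsum_eq fun a => f a).symm

lemma tsum_tsum_eq_tsum_sum_antidiagonal_of_nonneg {f : ℕ × ℕ → ℝ} (hf : 0 ≤ f)
    (h : Summable fun N => ∑ p ∈ antidiagonal N, f p) :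
    ∑' i, ∑' j, f (i, j) = ∑' N, ∑ p ∈ antidiagonal N, f p := by
  let e := HasAntidiagonal.sigmaAntidiagonalEquivProd (A := ℕ)
  have hfin (N : ℕ) : ∑' p : antidiagonal N, f p = ∑ p ∈ antidiagonal N, f p := by
    rw [tsum_fintype, sum_coe_sort]
  have hsigma : Summable (f ∘ e) :=
    (summable_sigma_of_nonneg fun x => hf _).2
      ⟨fun N => (hasSum_fintype _).summable, h.congr fun N => (hfin N).symm⟩
  have hprod : Summable f := e.summable_iff.1 hsigma
  rw [← hprod.tsum_prod' ((summable_prod_of_nonneg hf).1 hprod).1, ← e.tsum_eq f]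
  exact (hsigma.tsum_sigma' fun N => (hasSum_fintype _).summable).trans (tsum_congr hfin)

lemma qHyp_comm (q α β γ z : ℝ) : qHyp q α β γ z = qHyp q β α γ z := by
  simp only [qHyp, mul_comm (qPoch q α _)]

/-- The `(i, j)` term of the double series obtained by expanding `Cq1 q (m + 1 + i) n z`, in the
form given by `qFact_ratio_mul_qPoch_ratio`. -/
noncomputable def connectorSumTerm (q z : ℝ) (m n : ℕ) (p : ℕ × ℕ) : ℝ :=
  z ^ (p.1 + p.2 + 1) * q ^ (m * n + m + n) *
    ((1 - q) * qPoch q q n * (qPoch q q (m + p.1 + p.2) / qPoch q q (m + p.1 + p.2 + n + 1))) *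
    ((q ^ n) ^ p.1 * (qPoch q (q ^ n) p.2 / qPoch q q p.2))

section ConnectorSum

variable {q z : ℝ} (m n : ℕ)

lemma tsum_connectorSumTerm (hq0 : 0 ≤ q) (hq1 : q < 1) (i : ℕ) :
    ∑' j, connectorSumTerm q z m n (i, j) =
      q ^ m * z ^ (m + 1 + i - m) / qInt q (m + 1 + i) * Cq1 q (m + 1 + i) n z := by
  have hI : qInt q (m + 1 + i) ≠ 0 := by
    rw [qInt]; exact div_ne_zero (sub_pos.2 (pow_lt_one₀ hq0 hq1 (by omega))).ne' (by linarith)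
  have hFact : qFact q (m + 1 + i) = qFact q (m + i) * qInt q (m + 1 + i) := by
    rw [show m + 1 + i = m + i + 1 by omega, qFact_succ]
  rw [Cq1, qHyp, ← tsum_mul_left, ← tsum_mul_left]
  refine tsum_congr fun j => ?_
  have hratio := qFact_ratio_mul_qPoch_ratio hq0 hq1 (m + i) n j
  rw [show m + i + n + 1 = m + 1 + i + n by omega, show m + i + n + 2 = m + 1 + i + n + 1 by omega,
    show m + i + 1 = m + 1 + i by omega] at hratio
  calc connectorSumTerm q z m n (i, j)
      = z ^ (i + j + 1) * q ^ (m * n + m + n) * (q ^ n) ^ i *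
          ((1 - q) * qPoch q q n * (qPoch q q (m + i + j) / qPoch q q (m + i + j + n + 1))) *
          (qPoch q (q ^ n) j / qPoch q q j) := by
        simp only [connectorSumTerm]; ring
    _ = z ^ (i + j + 1) * q ^ (m * n + m + n) * (q ^ n) ^ i *
          (qFact q (m + i) * qFact q n / qFact q (m + 1 + i + n) *
            (qPoch q (q ^ (m + 1 + i)) j / qPoch q (q ^ (m + 1 + i + n + 1)) j)) *
          (qPoch q (q ^ n) j / qPoch q q j) := by rw [hratio]
    _ = _ := by
        rw [hFact, show m + 1 + i - m = i + 1 by omega]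
        field_simp
        ring

lemma connectorSumTerm_nonneg (hq0 : 0 ≤ q) (hq1 : q < 1) (hz : 0 ≤ z) :
    0 ≤ connectorSumTerm q z m n := fun p => by
  have hP := fun l => (qPoch_q_pos hq0 hq1 l).le
  exact mul_nonneg
    (mul_nonneg (mul_nonneg (pow_nonneg hz _) (pow_nonneg hq0 _))
      (mul_nonneg (mul_nonneg (by linarith) (hP n)) (div_nonneg (hP _) (hP _))))
    (mul_nonneg (pow_nonneg (pow_nonneg hq0 _) _)
      (div_nonneg (qPoch_pow_nonneg hq0 hq1.le n _) (hP _)))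

lemma sum_antidiagonal_connectorSumTerm (hq0 : 0 ≤ q) (hq1 : q < 1) (N : ℕ) :
    ∑ p ∈ antidiagonal N, connectorSumTerm q z m n p =
      z ^ (N + 1) * q ^ (m * n + m + n) *
        ((1 - q) * qPoch q q n * (qPoch q q (m + N) / qPoch q q (m + N + n + 1))) *
        (qPoch q (q ^ (n + 1)) N / qPoch q q N) := by
  calc ∑ p ∈ antidiagonal N, connectorSumTerm q z m n p
      = ∑ p ∈ antidiagonal N, z ^ (N + 1) * q ^ (m * n + m + n) *
          ((1 - q) * qPoch q q n * (qPoch q q (m + N) / qPoch q q (m + N + n + 1))) *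
          ((q ^ n) ^ p.1 * (qPoch q (q ^ n) p.2 / qPoch q q p.2)) :=
        sum_congr rfl fun p hp => by rw [connectorSumTerm, add_assoc m, mem_antidiagonal.1 hp]
    _ = _ := by rw [← mul_sum, sum_antidiagonal_pow_mul_qPoch_div hq0 hq1, ← pow_succ]

lemma summable_sum_antidiagonal_connectorSumTerm (hq0 : 0 ≤ q) (hq1 : q < 1) (hz0 : 0 ≤ z)
    (hz1 : z < 1) :
    Summable fun N => ∑ p ∈ antidiagonal N, connectorSumTerm q z m n p := by
  have hP := qPoch_q_pos hq0 hq1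
  refine Summable.of_nonneg_of_le
    (fun N => sum_nonneg fun p _ => connectorSumTerm_nonneg m n hq0 hq1 hz0 p) (fun N => ?_)
    ((summable_geometric_of_lt_one hz0 hz1).mul_left
      (z * q ^ (m * n + m + n) * ((1 - q) * qPoch q q n * (1 / qPoch q q (n + 1))) *
        (1 / qPoch q q n)))
  rw [sum_antidiagonal_connectorSumTerm m n hq0 hq1, pow_succ]
  have hx := qPoch_q_div_qPoch_q_add_le hq0 hq1 (m + N) (n + 1)
  have hy := qPoch_pow_succ_div_qPoch_q_le hq0 hq1 n N
  have hy0 := div_nonneg (qPoch_pow_succ_pos hq0 hq1 n N).le (hP N).le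
  have hc : 0 ≤ (1 - q) * qPoch q q n := mul_nonneg (by linarith) (hP n).le
  rw [← add_assoc] at hx
  calc _ ≤ z ^ N * z * q ^ (m * n + m + n) * ((1 - q) * qPoch q q n * (1 / qPoch q q (n + 1))) *
        (1 / qPoch q q n) := by
        gcongr _ * (_ * ?_) * ?_
        exact mul_nonneg (by positivity) (mul_nonneg hc (one_div_nonneg.2 (hP _).le))
    _ = _ := by ring

end ConnectorSum

lemma tsum_Cq1_eq {q z : ℝ} (hq0 : 0 ≤ q) (hq1 : q < 1) (hz0 : 0 ≤ z) (hz1 : z < 1)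
    (m n : ℕ) :
    ∑' a : {a : ℕ // m < a}, q ^ m * z ^ ((a : ℕ) - m) / qInt q a * Cq1 q a n z
      = z * q ^ (m * n + m + n) * (qFact q m * qFact q n / qFact q (m + n + 1)) *
        qHyp q (q ^ (m + 1)) (q ^ (n + 1)) (q ^ (m + n + 2)) z := by
  have hdiag (N : ℕ) : ∑ p ∈ antidiagonal N, connectorSumTerm q z m n p =
      z * q ^ (m * n + m + n) * (qFact q m * qFact q n / qFact q (m + n + 1)) *
        (qPoch q (q ^ (m + 1)) N * qPoch q (q ^ (n + 1)) N /
          (qPoch q (q ^ (m + n + 2)) N * qPoch q q N) * z ^ N) := by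
    rw [sum_antidiagonal_connectorSumTerm m n hq0 hq1,
      ← qFact_ratio_mul_qPoch_ratio hq0 hq1 m n N]
    ring
  calc _ = ∑' i, ∑' j, connectorSumTerm q z m n (i, j) := by
        rw [tsum_subtype_lt_eq_tsum_add (fun a => q ^ m * z ^ (a - m) / qInt q a * Cq1 q a n z)]
        exact tsum_congr fun i => (tsum_connectorSumTerm m n hq0 hq1 i).symm
    _ = ∑' N, ∑ p ∈ antidiagonal N, connectorSumTerm q z m n p :=
        tsum_tsum_eq_tsum_sum_antidiagonal_of_nonneg (connectorSumTerm_nonneg m n hq0 hq1 hz0)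
          (summable_sum_antidiagonal_connectorSumTerm m n hq0 hq1 hz0 hz1)
    _ = _ := by rw [tsum_congr hdiag, tsum_mul_left, qHyp]

/-- ∑_{a>m} (q^m z^{a−m}/[a])·C_q^{(1)}(a,n;z)
  = z·q^{mn+m+n}·[m]![n]!/[m+n+1]!·φ_q(q^{m+1},q^{n+1};q^{m+n+2};z);
in particular the left-hand side is symmetric in m and n. -/
theorem q_connector_sum_eval (q : ℝ) (hq0 : 0 < q) (hq1 : q < 1)
    (z : ℝ) (hz0 : 0 ≤ z) (hz1 : z < 1) (m n : ℕ) :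
    (∑' a : {a : ℕ // m < a}, q ^ m * z ^ ((a : ℕ) - m) / qInt q a * Cq1 q a n z
      = z * q ^ (m * n + m + n) * (qFact q m * qFact q n / qFact q (m + n + 1)) *
        qHyp q (q ^ (m + 1)) (q ^ (n + 1)) (q ^ (m + n + 2)) z) ∧
    (∑' a : {a : ℕ // m < a}, q ^ m * z ^ ((a : ℕ) - m) / qInt q a * Cq1 q a n z
      = ∑' b : {b : ℕ // n < b}, q ^ n * z ^ ((b : ℕ) - n) / qInt q b * Cq1 q b m z) := by
  refine ⟨tsum_Cq1_eq hq0.le hq1 hz0 hz1 m n, ?_⟩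
  rw [tsum_Cq1_eq hq0.le hq1 hz0 hz1 m n, tsum_Cq1_eq hq0.le hq1 hz0 hz1 n m,
    qHyp_comm, mul_comm (qFact q n), Nat.add_comm n m, Nat.mul_comm n m,
    Nat.add_right_comm (m * n) n m]
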